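/- Define φ_0(σ) = (√3/π)·2cosh(σ)/(1+2cosh(2σ)) (as a meromorphic function of complex σ). Then for all θ∈C with θ ≠ ±inπ/3 for every integer n, φ_0(θ + iπ/3) + φ_0(θ − iπ/3) − φ_0(θ) = 0. -/

import Mathlib

/-!
Since `sinh (3σ) = sinh σ * (1 + 2 cosh (2σ))`, the kernel is `φ₀ σ = c * sinh (2σ) / sinh (3σ)`
with `c = √3 / π`. The shifts `θ ± iπ/3` change `sinh (3θ)` into `-sinh (3θ)`, and the three
numerators cancel: `sinh (u + 2πi/3) + sinh (u - 2πi/3) = 2 cos (2π/3) sinh u = -sinh u`.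
-/

open Complex

noncomputable def φ₀ (σ : ℂ) : ℂ :=
  ((Real.sqrt 3 / Real.pi : ℝ) : ℂ) * (2 * Complex.cosh σ) / (1 + 2 * Complex.cosh (2 * σ))

open scoped Real

namespace Complex

theorem sinh_three_mul_eq_sinh_mul (x : ℂ) : sinh (3 * x) = sinh x * (1 + 2 * cosh (2 * x)) := by
  rw [sinh_three_mul, cosh_two_mul, cosh_sq]
  ring

theorem cosh_two_pi_div_three_mul_I : cosh (2 * π / 3 * I) = -1 / 2 := by
  rw [cosh_mul_I, show (2 * π / 3 : ℂ) = ((π - π / 3 : ℝ) : ℂ) by push_cast; ring, ← ofReal_cos,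
    Real.cos_pi_sub, Real.cos_pi_div_three]
  norm_num

theorem sinh_add_two_pi_div_three_mul_I_add_sinh_sub (x : ℂ) :
    sinh (x + 2 * π / 3 * I) + sinh (x - 2 * π / 3 * I) = -sinh x := by
  rw [sinh_add, sinh_sub, cosh_two_pi_div_three_mul_I]
  ring

theorem sinh_ne_zero_of_forall_ne {z : ℂ} (h : ∀ n : ℤ, z ≠ n * π * I) : sinh z ≠ 0 := by
  intro hz
  obtain ⟨k, hk⟩ := sin_eq_zero_iff.mp (show sin (z * I) = 0 by rw [sin_mul_I, hz, zero_mul])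
  exact h (-k) (by push_cast; linear_combination -I * hk + z * I_sq)

end Complex

theorem φ₀_eq_sinh_div_sinh {σ : ℂ} (h : sinh (3 * σ) ≠ 0) :
    φ₀ σ = ((√3 / π : ℝ) : ℂ) * sinh (2 * σ) / sinh (3 * σ) := by
  rw [sinh_three_mul_eq_sinh_mul] at h ⊢
  rw [φ₀, Complex.sinh_two_mul]
  field_simp [left_ne_zero_of_mul h, right_ne_zero_of_mul h]

/-- The kernel `φ₀` solves the homogeneous shift equation away from its poles. -/
theorem phi0_shift_equation (θ : ℂ)
    (hθ : ∀ n : ℤ, θ ≠ (n : ℂ) * (Real.pi : ℂ) / 3 * I ∧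
      θ ≠ -((n : ℂ) * (Real.pi : ℂ) / 3 * I)) :
    φ₀ (θ + (Real.pi : ℂ) * I / 3) + φ₀ (θ - (Real.pi : ℂ) * I / 3) - φ₀ θ = 0 := by
  have h3θ : sinh (3 * θ) ≠ 0 :=
    sinh_ne_zero_of_forall_ne fun n h ↦ (hθ n).1 (by linear_combination h / 3)
  have h3p : sinh (3 * (θ + π * I / 3)) = -sinh (3 * θ) := by
    rw [← sinh_add_pi_mul_I]; ring_nf
  have h3m : sinh (3 * (θ - π * I / 3)) = -sinh (3 * θ) := by
    rw [← sinh_sub_pi_mul_I]; ring_nf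
  have hsum : sinh (2 * (θ + π * I / 3)) + sinh (2 * (θ - π * I / 3)) = -sinh (2 * θ) := by
    rw [← sinh_add_two_pi_div_three_mul_I_add_sinh_sub]; ring_nf
  rw [φ₀_eq_sinh_div_sinh h3θ, φ₀_eq_sinh_div_sinh (h3p ▸ neg_ne_zero.mpr h3θ),
    φ₀_eq_sinh_div_sinh (h3m ▸ neg_ne_zero.mpr h3θ), h3p, h3m]
  calc _ = -((√3 / π : ℝ) : ℂ) *
        (sinh (2 * (θ + π * I / 3)) + sinh (2 * (θ - π * I / 3)) + sinh (2 * θ)) / sinh (3 * θ) := by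
        ring
    _ = 0 := by rw [hsum]; ring
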